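/- Let $(a_n)_{n\in\mathbb{Z}}$, $(b_n)_{n\in\mathbb{Z}}$, $(c_n)_{n\in\mathbb{Z}}$ be positive sequences, $C \ge 1$ with $\frac{a_m b_n}{a_n b_m} \le C$ for all $m \le n$, and $(\beta_k)_{k\in\mathbb{Z}}$ positive with $\beta = \sum_{k\in\mathbb{Z}} \beta_k < \infty$. Set, for $m \ge n$, $a_{m,n} = \frac{a_n}{a_m} c_n$ and $B_k := \frac{a_k}{a_{k+1} c_{k+1}}\beta_k$, and for $m \le n$, $b_{m,n} = \frac{b_n}{b_m} c_n$. Then for all $m \ge n$: $\sum_{k=-\infty}^{n-1} a_{m,k+1} B_k b_{k,n} + \sum_{k=n}^{m-1} a_{m,k+1} B_k a_{k,n} + \sum_{k=m}^{\infty} b_{m,k+1} B_k a_{k,n} \le \frac{a_n}{a_m} c_n \beta C$. -/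

import Mathlib

/-!
After cancelling the factor `a_{k+1} c_{k+1}` of `B_k`, every term of the three sums is
`(a_n / a_m) c_n β_k` times a ratio `a_p b_q / (a_q b_p)` with `p ≤ q` (namely `(k, n)` below `n`,
`(k, k)` between `n` and `m`, and `(m, k + 1)` above `m`), hence at most `(a_n / a_m) c_n β_k C`.
Summing over the partition `{k < n} ∪ [n, m) ∪ {k ≥ m}` of `ℤ` gives the bound.
-/

open Finset Set

theorem tsum_lt_add_sum_Ico_add_tsum_ge {α ι : Type*} [AddCommGroup α] [UniformSpace α]
    [IsUniformAddGroup α] [CompleteSpace α] [T2Space α] [LinearOrder ι] [LocallyFiniteOrder ι]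
    {f : ι → α} (hf : Summable f) {n m : ι} (hnm : n ≤ m) :
    ∑' k : {k // k < n}, f k + ∑ k ∈ Finset.Ico n m, f k + ∑' k : {k // m ≤ k}, f k
      = ∑' k, f k := by
  have hlt : ∑' k : {k // k < n}, f k = ∑' k, {k | k < n}.indicator f k :=
    tsum_subtype {k | k < n} f
  have hge : ∑' k : {k // m ≤ k}, f k = ∑' k, {k | m ≤ k}.indicator f k :=
    tsum_subtype {k | m ≤ k} f
  rw [hlt, hge, sum_eq_tsum_indicator, ← (hf.indicator _).tsum_add (hf.indicator _),
    ← ((hf.indicator _).add (hf.indicator _)).tsum_add (hf.indicator _)]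
  congr 1 with k
  simp only [Set.indicator, Set.mem_ofPred_eq, coe_Ico, Set.mem_Ico]
  split_ifs <;> grind

theorem tsum_le_tsum_of_nonneg_of_le {ι : Type*} {f g : ι → ℝ} (hf : ∀ i, 0 ≤ f i)
    (hfg : ∀ i, f i ≤ g i) (hg : Summable g) : ∑' i, f i ≤ ∑' i, g i :=
  (Summable.of_nonneg_of_le hf hfg hg).tsum_le_tsum hfg hg

theorem tsum_lt_add_sum_Ico_add_tsum_ge_le_tsum {ι : Type*} [LinearOrder ι]
    [LocallyFiniteOrder ι] {f₁ f₂ f₃ g : ι → ℝ} (hg : Summable g) {n m : ι} (hnm : n ≤ m)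
    (h₁ : ∀ k < n, f₁ k ∈ Icc 0 (g k)) (h₂ : ∀ k ∈ Finset.Ico n m, f₂ k ≤ g k)
    (h₃ : ∀ k, m ≤ k → f₃ k ∈ Icc 0 (g k)) :
    ∑' k : {k // k < n}, f₁ k + ∑ k ∈ Finset.Ico n m, f₂ k + ∑' k : {k // m ≤ k}, f₃ k
      ≤ ∑' k, g k := by
  rw [← tsum_lt_add_sum_Ico_add_tsum_ge hg hnm]
  have hlt := tsum_le_tsum_of_nonneg_of_le (fun k : {k // k < n} => (h₁ k k.2).1)
    (fun k => (h₁ k k.2).2) (hg.subtype _)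
  have hge := tsum_le_tsum_of_nonneg_of_le (fun k : {k // m ≤ k} => (h₃ k k.2).1)
    (fun k => (h₃ k k.2).2) (hg.subtype _)
  exact add_le_add (add_le_add hlt (sum_le_sum h₂)) hge

section ProductForm

variable {a b c β : ℤ → ℝ} {C : ℝ}

theorem dichotomy_lower_term_mem_Icc (ha : ∀ n, 0 < a n) (hb : ∀ n, 0 < b n)
    (hc : ∀ n, 0 < c n) (hβ : ∀ k, 0 < β k) {m n k : ℤ} (hC : a k * b n / (a n * b k) ≤ C) :
    a (k + 1) / a m * c (k + 1) * (a k / (a (k + 1) * c (k + 1)) * β k) * (b n / b k * c n)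
      ∈ Icc 0 (a n / a m * c n * β k * C) := by
  have := ha k; have := ha (k + 1); have := ha m; have := ha n; have := hb k; have := hb n
  have := hc (k + 1); have := hc n; have := hβ k
  have hfactor : a (k + 1) / a m * c (k + 1) * (a k / (a (k + 1) * c (k + 1)) * β k)
      * (b n / b k * c n) = a n / a m * c n * β k * (a k * b n / (a n * b k)) := by
    field_simp
  rw [hfactor]
  exact ⟨by positivity, by gcongr⟩

theorem dichotomy_middle_term_le (ha : ∀ n, 0 < a n) (hc : ∀ n, 0 < c n)
    (hβ : ∀ k, 0 < β k) (hC : 1 ≤ C) {m n k : ℤ} :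
    a (k + 1) / a m * c (k + 1) * (a k / (a (k + 1) * c (k + 1)) * β k) * (a n / a k * c n)
      ≤ a n / a m * c n * β k * C := by
  have := ha k; have := ha (k + 1); have := ha m; have := ha n
  have := hc (k + 1); have := hc n; have := hβ k
  have hcancel : a (k + 1) / a m * c (k + 1) * (a k / (a (k + 1) * c (k + 1)) * β k)
      * (a n / a k * c n) = a n / a m * c n * β k := by
    field_simp
  rw [hcancel]
  exact le_mul_of_one_le_right (by positivity) hC

theorem dichotomy_upper_term_mem_Icc (ha : ∀ n, 0 < a n) (hb : ∀ n, 0 < b n)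
    (hc : ∀ n, 0 < c n) (hβ : ∀ k, 0 < β k) {m n k : ℤ}
    (hC : a m * b (k + 1) / (a (k + 1) * b m) ≤ C) :
    b (k + 1) / b m * c (k + 1) * (a k / (a (k + 1) * c (k + 1)) * β k) * (a n / a k * c n)
      ∈ Icc 0 (a n / a m * c n * β k * C) := by
  have := ha k; have := ha (k + 1); have := ha m; have := ha n; have := hb m; have := hb (k + 1)
  have := hc (k + 1); have := hc n; have := hβ k
  have hfactor : b (k + 1) / b m * c (k + 1) * (a k / (a (k + 1) * c (k + 1)) * β k)
      * (a n / a k * c n) = a n / a m * c n * β k * (a m * b (k + 1) / (a (k + 1) * b m)) := by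
    field_simp
  rw [hfactor]
  exact ⟨by positivity, by gcongr⟩

end ProductForm

theorem stmt_10_general (a b c : ℤ → ℝ) (ha : ∀ n, 0 < a n) (hb : ∀ n, 0 < b n)
    (hc : ∀ n, 0 < c n) (C : ℝ)
    (hC : ∀ m n : ℤ, m ≤ n → a m * b n / (a n * b m) ≤ C)
    (β : ℤ → ℝ) (hβpos : ∀ k, 0 < β k) (hβ : Summable β)
    (A : ℤ → ℤ → ℝ) (hA : ∀ m n : ℤ, n ≤ m → A m n = a n / a m * c n)
    (Bd : ℤ → ℤ → ℝ) (hBd : ∀ m n : ℤ, m ≤ n → Bd m n = b n / b m * c n)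
    (B : ℤ → ℝ) (hB : ∀ k : ℤ, B k = a k / (a (k + 1) * c (k + 1)) * β k)
    (m n : ℤ) (hmn : n ≤ m) :
    (∑' k : {k : ℤ // k < n}, A m ((k : ℤ) + 1) * B k * Bd k n)
      + (∑ k ∈ Finset.Ico n m, A m (k + 1) * B k * A k n)
      + (∑' k : {k : ℤ // m ≤ k}, Bd m ((k : ℤ) + 1) * B k * A k n)
      ≤ a n / a m * c n * (∑' k : ℤ, β k) * C := by
  have hC1 : 1 ≤ C := by
    simpa [div_self (mul_pos (ha n) (hb n)).ne'] using hC n n le_rfl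
  calc _ ≤ ∑' k, a n / a m * c n * β k * C := by
        refine tsum_lt_add_sum_Ico_add_tsum_ge_le_tsum (f₁ := fun k => A m (k + 1) * B k * Bd k n)
          (f₂ := fun k => A m (k + 1) * B k * A k n) (f₃ := fun k => Bd m (k + 1) * B k * A k n)
          ((hβ.mul_left _).mul_right C) hmn ?_ ?_ ?_
        · intro k hk
          rw [hA m _ (by omega), hB, hBd k n hk.le]
          exact dichotomy_lower_term_mem_Icc ha hb hc hβpos (hC k n hk.le)
        · intro k hk
          rw [Finset.mem_Ico] at hk
          rw [hA m _ (by omega), hB, hA k n hk.1]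
          exact dichotomy_middle_term_le ha hc hβpos hC1
        · intro k hk
          rw [hBd m _ (by omega), hB, hA k n (by omega)]
          exact dichotomy_upper_term_mem_Icc ha hb hc hβpos (hC m (k + 1) (by omega))
    _ = a n / a m * c n * (∑' k, β k) * C := by rw [tsum_mul_right, tsum_mul_left]

/-- Estimate of `λ_{m,n}` for general dichotomies with product-form bounds on `ℤ`. -/
theorem stmt_10 (a b c : ℤ → ℝ) (ha : ∀ n, 0 < a n) (hb : ∀ n, 0 < b n)
    (hc : ∀ n, 0 < c n) (C : ℝ) (hC1 : 1 ≤ C)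
    (hC : ∀ m n : ℤ, m ≤ n → a m * b n / (a n * b m) ≤ C)
    (β : ℤ → ℝ) (hβpos : ∀ k, 0 < β k) (hβ : Summable β)
    (A : ℤ → ℤ → ℝ) (hA : ∀ m n : ℤ, n ≤ m → A m n = a n / a m * c n)
    (Bd : ℤ → ℤ → ℝ) (hBd : ∀ m n : ℤ, m ≤ n → Bd m n = b n / b m * c n)
    (B : ℤ → ℝ) (hB : ∀ k : ℤ, B k = a k / (a (k + 1) * c (k + 1)) * β k)
    (m n : ℤ) (hmn : n ≤ m) :
    (∑' k : {k : ℤ // k < n}, A m ((k : ℤ) + 1) * B k * Bd k n)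
      + (∑ k ∈ Finset.Ico n m, A m (k + 1) * B k * A k n)
      + (∑' k : {k : ℤ // m ≤ k}, Bd m ((k : ℤ) + 1) * B k * A k n)
      ≤ a n / a m * c n * (∑' k : ℤ, β k) * C :=
  stmt_10_general a b c ha hb hc C hC β hβpos hβ A hA Bd hBd B hB m n hmn
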